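/- arXiv:1502.02754 — 3 statements merged into one kernel-verified Lean document; each statement's English description precedes it below -/
import Mathlib

section
/- λ ∈ ℂ is an eigenvalue of the linear operator L[p] = −(g p)′ − w p with boundary condition g(x₀)p(x₀) = ∫_{x₀}^{x₁} q(x)p(x) dx if and only if ξ(λ) = 0, where ξ(λ) = ∫_{x₀}^{x₁} (q(x)/g(x))·exp(−∫_{x₀}^x (λ + w(s))/g(s) ds) dx − 1. -/
/-!
Dividing by `g`, the eigenvalue equation for `u = g φ` is the linear ODE
`u' = -((λ + w) / g) u`, so every eigenfunction is `φ = u(x₀) E / g` with the integrating factor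
`E x = exp (-∫_{x₀}^x (λ + w) / g)`, and `E / g` itself solves the equation. The nonlocal
boundary condition then reads `u(x₀) = u(x₀) ∫ q E / g = u(x₀) (ξ(λ) + 1)`, and a nonzero
solution forces `u(x₀) ≠ 0`.
-/

open MeasureTheory Set

/-- The characteristic function `ξ(λ)`. -/
noncomputable def xiC (x₀ x₁ : ℝ) (g w q : ℝ → ℝ) (l : ℂ) : ℂ :=
  (∫ x in x₀..x₁, ((q x / g x : ℝ) : ℂ) *
      Complex.exp (-∫ s in x₀..x, (l + (w s : ℂ)) / (g s : ℂ))) - 1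

theorem ContinuousOn.exists_continuous_eqOn_Icc {β : Type*} [TopologicalSpace β] {a b : ℝ}
    {k : ℝ → β} (hab : a ≤ b) (hk : ContinuousOn k (Icc a b)) :
    ∃ K : ℝ → β, Continuous K ∧ EqOn K k (Icc a b) :=
  ⟨IccExtend hab ((Icc a b).domRestrict k), hk.domRestrict.Icc_extend',
    fun _ hx => IccExtend_of_mem hab _ hx⟩

noncomputable def expNegIntegral (K : ℝ → ℂ) (a x : ℝ) : ℂ :=
  Complex.exp (-∫ s in a..x, K s)

section IntegratingFactor

variable {K : ℝ → ℂ}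

theorem expNegIntegral_self (K : ℝ → ℂ) (a : ℝ) : expNegIntegral K a a = 1 := by
  simp [expNegIntegral]

theorem expNegIntegral_ne_zero (K : ℝ → ℂ) (a x : ℝ) : expNegIntegral K a x ≠ 0 :=
  Complex.exp_ne_zero _

theorem hasDerivAt_expNegIntegral (hK : Continuous K) (a x : ℝ) :
    HasDerivAt (expNegIntegral K a) (-K x * expNegIntegral K a x) x :=
  (hK.integral_hasStrictDerivAt a x).hasDerivAt.neg.cexp.congr_deriv (mul_comm _ _)

theorem continuous_expNegIntegral (hK : Continuous K) (a : ℝ) :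
    Continuous (expNegIntegral K a) :=
  continuous_iff_continuousAt.2 fun x => (hasDerivAt_expNegIntegral hK a x).continuousAt

theorem eqOn_mul_expNegIntegral {a b : ℝ} {u : ℝ → ℂ} (hK : Continuous K)
    (hu : ∀ x ∈ Icc a b, HasDerivWithinAt u (-K x * u x) (Icc a b) x) :
    EqOn u (fun x => u a * expNegIntegral K a x) (Icc a b) := by
  intro x hx
  set F : ℝ → ℂ := fun y => ∫ s in a..y, K s
  have hF : ∀ y, HasDerivAt F (K y) y := fun y =>
    (hK.integral_hasStrictDerivAt a y).hasDerivAt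
  have hv_const : ∀ y ∈ Icc a b, u y * Complex.exp (F y) = u a * Complex.exp (F a) := by
    refine constant_of_has_deriv_right_zero ?_ fun y hy => ?_
    · have hu_cont : ContinuousOn u (Icc a b) := fun y hy => (hu y hy).continuousWithinAt
      exact hu_cont.mul (Complex.continuous_exp.comp (continuous_iff_continuousAt.2 fun y =>
          (hF y).continuousAt)).continuousOn
    · have h := (hu y (Ico_subset_Icc_self hy)).mul (hF y).cexp.hasDerivWithinAt
      rw [show -K y * u y * Complex.exp (F y) + u y * (Complex.exp (F y) * K y) = 0 by ring] at h
      exact h.mono_of_mem_nhdsWithin (Icc_mem_nhdsGE_of_mem hy)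
  have hFa : F a = 0 := intervalIntegral.integral_same
  calc u x = u x * Complex.exp (F x) * Complex.exp (-F x) := by
        rw [mul_assoc, ← Complex.exp_add, add_neg_cancel, Complex.exp_zero, mul_one]
    _ = u a * expNegIntegral K a x := by
        rw [hv_const x hx, hFa, Complex.exp_zero, mul_one]; rfl

end IntegratingFactor

def IsEigenfunction (x₀ x₁ : ℝ) (g w q : ℝ → ℝ) (l : ℂ) (φ : ℝ → ℂ) : Prop :=
  IntegrableOn φ (Icc x₀ x₁) ∧
    DifferentiableOn ℝ (fun t => (g t : ℂ) * φ t) (Icc x₀ x₁) ∧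
    IntegrableOn (derivWithin (fun t => (g t : ℂ) * φ t) (Icc x₀ x₁)) (Icc x₀ x₁) ∧
    (g x₀ : ℂ) * φ x₀ = (∫ x in x₀..x₁, (q x : ℂ) * φ x) ∧
    (∀ x ∈ Icc x₀ x₁,
      -(derivWithin (fun t => (g t : ℂ) * φ t) (Icc x₀ x₁) x) - (w x : ℂ) * φ x = l * φ x) ∧
    ¬(∀ x ∈ Icc x₀ x₁, φ x = 0)

section Eigenfunctions

variable {x₀ x₁ : ℝ} {g w q : ℝ → ℝ} {l : ℂ} {K : ℝ → ℂ}

theorem xiC_eq_integral_sub_one (hx : x₀ ≤ x₁)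
    (hKeq : EqOn K (fun x => (l + (w x : ℂ)) / (g x : ℂ)) (Icc x₀ x₁)) :
    xiC x₀ x₁ g w q l = (∫ x in x₀..x₁, (q x : ℂ) * (expNegIntegral K x₀ x / g x)) - 1 := by
  unfold xiC expNegIntegral
  congr 1
  refine intervalIntegral.integral_congr fun x hx' => ?_
  rw [uIcc_of_le hx] at hx'
  have hinner : (∫ s in x₀..x, (l + (w s : ℂ)) / (g s : ℂ)) = ∫ s in x₀..x, K s := by
    refine intervalIntegral.integral_congr fun s hs => (hKeq ?_).symm
    rw [uIcc_of_le hx'.1] at hs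
    exact ⟨hs.1, hs.2.trans hx'.2⟩
  simp only [hinner]
  push_cast
  ring

theorem IsEigenfunction.mul_eqOn_expNegIntegral (hg : ∀ x ∈ Icc x₀ x₁, (g x : ℂ) ≠ 0) (hK : Continuous K)
    (hKeq : EqOn K (fun x => (l + (w x : ℂ)) / (g x : ℂ)) (Icc x₀ x₁)) {φ : ℝ → ℂ}
    (hφ : IsEigenfunction x₀ x₁ g w q l φ) :
    EqOn (fun t => (g t : ℂ) * φ t) (fun x => g x₀ * φ x₀ * expNegIntegral K x₀ x)
      (Icc x₀ x₁) := by
  obtain ⟨-, hdiff, -, -, heig, -⟩ := hφ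
  refine eqOn_mul_expNegIntegral hK fun x hx => ?_
  have hderiv : derivWithin (fun t => (g t : ℂ) * φ t) (Icc x₀ x₁) x = -K x * (g x * φ x) :=
    calc _ = -(l + w x) * φ x := by linear_combination (-1 : ℂ) * heig x hx
      _ = -K x * (g x * φ x) := by rw [hKeq hx]; field_simp [hg x hx]
  exact hderiv ▸ (hdiff x hx).hasDerivWithinAt

theorem isEigenfunction_expNegIntegral_div (hx : x₀ < x₁)
    (hg : ∀ x ∈ Icc x₀ x₁, (g x : ℂ) ≠ 0) (hgc : ContinuousOn g (Icc x₀ x₁))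
    (hK : Continuous K) (hKeq : EqOn K (fun x => (l + (w x : ℂ)) / (g x : ℂ)) (Icc x₀ x₁))
    (h1 : (∫ x in x₀..x₁, (q x : ℂ) * (expNegIntegral K x₀ x / g x)) = 1) :
    IsEigenfunction x₀ x₁ g w q l (fun x => expNegIntegral K x₀ x / g x) := by
  set E := expNegIntegral K x₀
  have hx₀ : x₀ ∈ Icc x₀ x₁ := left_mem_Icc.2 hx.le
  have hgE : EqOn (fun t => (g t : ℂ) * (E t / g t)) E (Icc x₀ x₁) := fun t ht =>
    mul_div_cancel₀ _ (hg t ht)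
  have hderiv : ∀ x ∈ Icc x₀ x₁,
      derivWithin (fun t => (g t : ℂ) * (E t / g t)) (Icc x₀ x₁) x = -K x * E x := fun x hx' =>
    ((hasDerivAt_expNegIntegral hK x₀ x).hasDerivWithinAt.congr hgE (hgE hx')).derivWithin
      (uniqueDiffOn_Icc hx x hx')
  refine ⟨?_, ?_, ?_, ?_, fun x hx' => ?_, fun h => ?_⟩
  · exact ((continuous_expNegIntegral hK x₀).continuousOn.div
      (Complex.continuous_ofReal.comp_continuousOn hgc) hg).integrableOn_Icc
  · exact fun x hx' => (hasDerivAt_expNegIntegral hK x₀ x).differentiableAt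
      |>.differentiableWithinAt.congr hgE (hgE hx')
  · refine IntegrableOn.congr_fun ?_ (fun x hx' => (hderiv x hx').symm) measurableSet_Icc
    exact ((hK.neg.mul (continuous_expNegIntegral hK x₀)).continuousOn).integrableOn_Icc
  · beta_reduce
    rw [h1, mul_div_cancel₀ _ (hg x₀ hx₀)]
    exact expNegIntegral_self K x₀
  · rw [hderiv x hx', hKeq hx']
    field_simp [hg x hx']
    ring
  · exact div_ne_zero (expNegIntegral_ne_zero K x₀ x₀) (hg x₀ hx₀) (h x₀ hx₀)

end Eigenfunctions

theorem stmt_8_general (x₀ x₁ : ℝ) (hx : x₀ < x₁)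
    (g w q : ℝ → ℝ)
    (hg : ContDiffOn ℝ 1 g (Icc x₀ x₁)) (hgpos : ∀ x ∈ Icc x₀ x₁, 0 < g x)
    (hw : ContinuousOn w (Icc x₀ x₁))
    (l : ℂ) :
    (∃ φ : ℝ → ℂ,
        IntegrableOn φ (Icc x₀ x₁) ∧
        DifferentiableOn ℝ (fun t => (g t : ℂ) * φ t) (Icc x₀ x₁) ∧
        IntegrableOn (derivWithin (fun t => (g t : ℂ) * φ t) (Icc x₀ x₁)) (Icc x₀ x₁) ∧
        (g x₀ : ℂ) * φ x₀ = (∫ x in x₀..x₁, (q x : ℂ) * φ x) ∧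
        (∀ x ∈ Icc x₀ x₁,
          -(derivWithin (fun t => (g t : ℂ) * φ t) (Icc x₀ x₁) x) - (w x : ℂ) * φ x
            = l * φ x) ∧
        ¬(∀ x ∈ Icc x₀ x₁, φ x = 0)) ↔
      xiC x₀ x₁ g w q l = 0 := by
  change (∃ φ, IsEigenfunction x₀ x₁ g w q l φ) ↔ _
  have hg0 : ∀ x ∈ Icc x₀ x₁, (g x : ℂ) ≠ 0 := fun x hx' =>
    Complex.ofReal_ne_zero.2 (hgpos x hx').ne'
  have hgc : ContinuousOn (fun x => (g x : ℂ)) (Icc x₀ x₁) :=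
    Complex.continuous_ofReal.comp_continuousOn hg.continuousOn
  obtain ⟨K, hK, hKeq⟩ := ContinuousOn.exists_continuous_eqOn_Icc
    (k := fun x => (l + (w x : ℂ)) / (g x : ℂ)) hx.le
    ((continuousOn_const.add (Complex.continuous_ofReal.comp_continuousOn hw)).div hgc hg0)
  rw [xiC_eq_integral_sub_one hx.le hKeq, sub_eq_zero]
  refine ⟨fun ⟨φ, hφ⟩ => ?_, fun h1 =>
    ⟨_, isEigenfunction_expNegIntegral_div hx hg0 hg.continuousOn hK hKeq h1⟩⟩
  obtain ⟨-, -, -, hbc, -, hnt⟩ := id hφ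
  set c := (g x₀ : ℂ) * φ x₀
  have hφc : EqOn φ (fun x => c * (expNegIntegral K x₀ x / g x)) (Icc x₀ x₁) := fun x hx' => by
    show φ x = c * (expNegIntegral K x₀ x / g x)
    rw [← mul_div_assoc, eq_div_iff (hg0 x hx'), mul_comm (φ x)]
    exact hφ.mul_eqOn_expNegIntegral hg0 hK hKeq hx'
  have hc : c ≠ 0 := fun hc => hnt fun x hx' => by simp [hφc hx', hc]
  refine mul_left_cancel₀ hc ?_
  rw [mul_one, ← intervalIntegral.integral_const_mul]
  refine (intervalIntegral.integral_congr fun x hx' => ?_).trans hbc.symm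
  rw [uIcc_of_le hx.le] at hx'
  simp only [hφc hx']
  ring

/-- `λ` is an eigenvalue of `L[p] = -(gp)' - wp` with the nonlocal boundary condition
`g(x₀)p(x₀) = ∫ q p` if and only if `ξ(λ) = 0`. -/
theorem stmt_8 (x₀ x₁ Mq : ℝ) (hx₀ : 0 < x₀) (hx : x₀ < x₁)
    (g w q : ℝ → ℝ)
    (hg : ContDiffOn ℝ 1 g (Icc x₀ x₁)) (hgpos : ∀ x ∈ Icc x₀ x₁, 0 < g x)
    (hw : ContinuousOn w (Icc x₀ x₁)) (hw0 : ∀ x ∈ Icc x₀ x₁, 0 ≤ w x)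
    (hqm : Measurable q) (hqb : ∀ x ∈ Icc x₀ x₁, |q x| ≤ Mq)
    (hq0 : ∀ᵐ x ∂(volume.restrict (Icc x₀ x₁)), 0 ≤ q x)
    (l : ℂ) :
    (∃ φ : ℝ → ℂ,
        IntegrableOn φ (Icc x₀ x₁) ∧
        DifferentiableOn ℝ (fun t => (g t : ℂ) * φ t) (Icc x₀ x₁) ∧
        IntegrableOn (derivWithin (fun t => (g t : ℂ) * φ t) (Icc x₀ x₁)) (Icc x₀ x₁) ∧
        (g x₀ : ℂ) * φ x₀ = (∫ x in x₀..x₁, (q x : ℂ) * φ x) ∧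
        (∀ x ∈ Icc x₀ x₁,
          -(derivWithin (fun t => (g t : ℂ) * φ t) (Icc x₀ x₁) x) - (w x : ℂ) * φ x
            = l * φ x) ∧
        ¬(∀ x ∈ Icc x₀ x₁, φ x = 0)) ↔
      xiC x₀ x₁ g w q l = 0 :=
  stmt_8_general x₀ x₁ hx g w q hg hgpos hw l
end

section
/- There exists a unique real number λ₀ such that ξ(λ₀) = 0, where ξ(λ) = ∫_{x₀}^{x₁} (q(x)/g(x))·exp(−∫_{x₀}^x (λ + w(s))/g(s) ds) dx − 1, provided ∫_{x₀}^{x₁} q > 0. -/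
/-!
Writing `F x = ∫_{x₀}^x 1/g` and `W x = ∫_{x₀}^x w/g`, one has
`ξ(λ) + 1 = ∫_{x₀}^{x₁} h e^{-λ F}` with `h = (q/g) e^{-W} ≥ 0` and `∫ h > 0`, while `F > 0` on
`(x₀, x₁]`. Such a Laplace-type integral is continuous and strictly decreasing in `λ`, tends to `0`
as `λ → ∞` by dominated convergence, and is at least `∫ h - λ ∫ h F` because `e^y ≥ 1 + y`; so it
takes the value `1` exactly once.
-/

open MeasureTheory Set

/-- The characteristic function restricted to real `λ`. -/
noncomputable def xiR (x₀ x₁ : ℝ) (g w q : ℝ → ℝ) (l : ℝ) : ℝ :=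
  (∫ x in x₀..x₁, q x / g x * Real.exp (-∫ s in x₀..x, (l + w s) / g s)) - 1

open Filter Topology

section LaplaceIntegral

variable {α : Type*} [MeasurableSpace α] {μ : Measure α} {h F : α → ℝ} {B : ℝ}

noncomputable def laplaceIntegral (μ : Measure α) (h F : α → ℝ) (l : ℝ) : ℝ :=
  ∫ x, h x * Real.exp (-(l * F x)) ∂μ

lemma integral_mul_pos_of_integral_pos {f k : α → ℝ} (hf : Integrable f μ) (hf0 : 0 ≤ᵐ[μ] f)
    (hfpos : 0 < ∫ x, f x ∂μ) (hk : ∀ᵐ x ∂μ, 0 < k x)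
    (hfk : Integrable (fun x => f x * k x) μ) : 0 < ∫ x, f x * k x ∂μ := by
  rw [integral_pos_iff_support_of_nonneg_ae hf0 hf] at hfpos
  have hfk0 : 0 ≤ᵐ[μ] fun x => f x * k x := by
    filter_upwards [hf0, hk] with x hfx hkx
    exact mul_nonneg hfx hkx.le
  rw [integral_pos_iff_support_of_nonneg_ae hfk0 hfk]
  refine hfpos.trans_le (measure_mono_ae ?_)
  filter_upwards [hk] with x hkx hfx
  exact mul_ne_zero hfx hkx.ne'

lemma norm_exp_neg_mul_le {l y : ℝ} (hy : ‖y‖ ≤ B) :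
    ‖Real.exp (-(l * y))‖ ≤ Real.exp (|l| * B) := by
  rw [Real.norm_eq_abs, abs_of_pos (Real.exp_pos _), Real.exp_le_exp]
  calc -(l * y) ≤ |l| * ‖y‖ := by rw [Real.norm_eq_abs, ← abs_mul]; exact neg_le_abs _
    _ ≤ |l| * B := mul_le_mul_of_nonneg_left hy (abs_nonneg l)

lemma integrable_mul_exp_neg_mul (hh : Integrable h μ) (hF : AEStronglyMeasurable F μ)
    (hFB : ∀ᵐ x ∂μ, ‖F x‖ ≤ B) (l : ℝ) :
    Integrable (fun x => h x * Real.exp (-(l * F x))) μ :=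
  hh.mul_bdd (Real.continuous_exp.comp_aestronglyMeasurable (hF.const_mul l).neg)
    (hFB.mono fun _ hx => norm_exp_neg_mul_le hx)

lemma continuous_laplaceIntegral (hh : Integrable h μ) (hF : AEStronglyMeasurable F μ)
    (hFB : ∀ᵐ x ∂μ, ‖F x‖ ≤ B) : Continuous (laplaceIntegral μ h F) := by
  refine continuous_iff_continuousAt.2 fun l => continuousAt_of_dominated
    (bound := fun x => ‖h x‖ * Real.exp ((|l| + 1) * B)) ?_ ?_ (hh.norm.mul_const _) ?_
  · exact Eventually.of_forall fun m =>
      (integrable_mul_exp_neg_mul hh hF hFB m).aestronglyMeasurable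
  · filter_upwards [Metric.ball_mem_nhds l one_pos] with m hm
    filter_upwards [hFB] with x hx
    have hml : |m| ≤ |l| + 1 := by
      rw [Metric.mem_ball, Real.dist_eq] at hm
      linarith [abs_sub_abs_le_abs_sub m l]
    rw [norm_mul]
    gcongr
    exact (norm_exp_neg_mul_le hx).trans
      (Real.exp_le_exp.2 (mul_le_mul_of_nonneg_right hml ((norm_nonneg _).trans hx)))
  · exact ae_of_all _ fun x => Continuous.continuousAt (by fun_prop)

lemma strictAnti_laplaceIntegral (hh : Integrable h μ) (hh0 : 0 ≤ᵐ[μ] h)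
    (hhpos : 0 < ∫ x, h x ∂μ) (hF : AEStronglyMeasurable F μ) (hFB : ∀ᵐ x ∂μ, ‖F x‖ ≤ B)
    (hFpos : ∀ᵐ x ∂μ, 0 < F x) : StrictAnti (laplaceIntegral μ h F) := by
  intro a b hab
  have ha := integrable_mul_exp_neg_mul hh hF hFB a
  have hb := integrable_mul_exp_neg_mul hh hF hFB b
  have hdiff : 0 < ∫ x, h x * (Real.exp (-(a * F x)) - Real.exp (-(b * F x))) ∂μ := by
    refine integral_mul_pos_of_integral_pos hh hh0 hhpos ?_ ?_
    · filter_upwards [hFpos] with x hx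
      rw [sub_pos, Real.exp_lt_exp]
      nlinarith
    · simp only [mul_sub]
      exact ha.sub hb
  simp only [mul_sub] at hdiff
  rw [integral_sub ha hb] at hdiff
  unfold laplaceIntegral
  linarith

lemma tendsto_laplaceIntegral_atTop (hh : Integrable h μ) (hF : AEStronglyMeasurable F μ)
    (hFpos : ∀ᵐ x ∂μ, 0 < F x) : Tendsto (laplaceIntegral μ h F) atTop (𝓝 0) := by
  have hlim := tendsto_integral_filter_of_dominated_convergence (f := fun _ => (0 : ℝ))
    (F := fun l x => h x * Real.exp (-(l * F x))) (μ := μ) (l := atTop) (fun x => ‖h x‖)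
    (Eventually.of_forall fun l =>
      hh.aestronglyMeasurable.mul
        (Real.continuous_exp.comp_aestronglyMeasurable (hF.const_mul l).neg))
    ?_ hh.norm ?_
  · rw [integral_zero] at hlim
    exact hlim
  · filter_upwards [eventually_ge_atTop 0] with l hl
    filter_upwards [hFpos] with x hx
    rw [norm_mul, Real.norm_of_nonneg (Real.exp_pos _).le]
    exact mul_le_of_le_one_right (norm_nonneg _)
      (Real.exp_le_one_iff.2 (neg_nonpos.2 (mul_nonneg hl hx.le)))
  · filter_upwards [hFpos] with x hx
    simpa using (Real.tendsto_exp_neg_atTop_nhds_zero.comp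
      (tendsto_id.atTop_mul_const hx)).const_mul (h x)

lemma integral_sub_mul_le_laplaceIntegral (hh : Integrable h μ) (hh0 : 0 ≤ᵐ[μ] h)
    (hF : AEStronglyMeasurable F μ) (hFB : ∀ᵐ x ∂μ, ‖F x‖ ≤ B) (l : ℝ) :
    (∫ x, h x ∂μ) - l * ∫ x, h x * F x ∂μ ≤ laplaceIntegral μ h F l := by
  have hhF : Integrable (fun x => h x * F x) μ := hh.mul_bdd hF hFB
  calc (∫ x, h x ∂μ) - l * ∫ x, h x * F x ∂μ = ∫ x, h x * (1 - l * F x) ∂μ := by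
        simp only [mul_sub, mul_one, mul_left_comm (h _) l]
        rw [integral_sub hh (hhF.const_mul l), integral_const_mul]
    _ ≤ laplaceIntegral μ h F l := by
        refine integral_mono_ae ((hh.sub (hhF.const_mul l)).congr ?_)
          (integrable_mul_exp_neg_mul hh hF hFB l) ?_
        · exact ae_of_all _ fun x => by simp only [Pi.sub_apply]; ring
        · filter_upwards [hh0] with x hx
          exact mul_le_mul_of_nonneg_left (by linarith [Real.add_one_le_exp (-(l * F x))]) hx

theorem existsUnique_laplaceIntegral_eq (hh : Integrable h μ) (hh0 : 0 ≤ᵐ[μ] h)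
    (hhpos : 0 < ∫ x, h x ∂μ) (hF : AEStronglyMeasurable F μ) (hFB : ∀ᵐ x ∂μ, ‖F x‖ ≤ B)
    (hFpos : ∀ᵐ x ∂μ, 0 < F x) {c : ℝ} (hc : 0 < c) :
    ∃! l, laplaceIntegral μ h F l = c := by
  have hI : 0 < ∫ x, h x * F x ∂μ :=
    integral_mul_pos_of_integral_pos hh hh0 hhpos hFpos (hh.mul_bdd hF hFB)
  obtain ⟨b, hb⟩ :=
    ((tendsto_laplaceIntegral_atTop hh hF hFpos).eventually (eventually_lt_nhds hc)).exists
  have ha : c ≤ laplaceIntegral μ h F (-c / ∫ x, h x * F x ∂μ) := by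
    have := integral_sub_mul_le_laplaceIntegral hh hh0 hF hFB (-c / ∫ x, h x * F x ∂μ)
    rw [div_mul_cancel₀ _ hI.ne'] at this
    linarith
  obtain ⟨l, hl⟩ :=
    intermediate_value_univ b _ (continuous_laplaceIntegral hh hF hFB) ⟨hb.le, ha⟩
  exact ⟨l, hl, fun l' hl' =>
    (strictAnti_laplaceIntegral hh hh0 hhpos hF hFB hFpos).injective (hl'.trans hl.symm)⟩

end LaplaceIntegral

section Interval

variable {a b : ℝ}

lemma continuousOn_primitive_Icc {f : ℝ → ℝ} (hab : a ≤ b) (hf : ContinuousOn f (Icc a b)) :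
    ContinuousOn (fun x => ∫ s in a..x, f s) (Icc a b) := by
  rw [← uIcc_of_le hab] at hf ⊢
  exact intervalIntegral.continuousOn_primitive_interval hf.integrableOn_uIcc

lemma integral_add_div_eq_mul_add {g w : ℝ → ℝ} {x : ℝ} (hx : x ∈ Icc a b)
    (hginv : ContinuousOn (fun s => (g s)⁻¹) (Icc a b))
    (hwg : ContinuousOn (fun s => w s / g s) (Icc a b)) (l : ℝ) :
    ∫ s in a..x, (l + w s) / g s = l * (∫ s in a..x, (g s)⁻¹) + ∫ s in a..x, w s / g s := by
  have hsub : uIcc a x ⊆ Icc a b := by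
    rw [uIcc_of_le hx.1]
    exact Icc_subset_Icc_right hx.2
  simp only [add_div, div_eq_mul_inv l]
  rw [intervalIntegral.integral_add ((hginv.mono hsub).intervalIntegrable.const_mul l)
    (hwg.mono hsub).intervalIntegrable, intervalIntegral.integral_const_mul]

lemma integral_pos_of_continuousOn_of_pos {f : ℝ → ℝ} {x : ℝ} (hf : ContinuousOn f (Icc a b))
    (hpos : ∀ s ∈ Icc a b, 0 < f s) (hx : x ∈ Ioc a b) : 0 < ∫ s in a..x, f s :=
  intervalIntegral.intervalIntegral_pos_of_pos_on
    ((hf.mono (Icc_subset_Icc_right hx.2)).intervalIntegrable_of_Icc hx.1.le)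
    (fun s hs => hpos s ⟨hs.1.le, hs.2.le.trans hx.2⟩) hx.1

lemma setIntegral_Ioc_mul_pos {q k : ℝ → ℝ} (hab : a ≤ b) (hq : IntegrableOn q (Icc a b))
    (hq0 : ∀ᵐ x ∂volume.restrict (Icc a b), 0 ≤ q x) (hqpos : 0 < ∫ x in a..b, q x)
    (hk : ContinuousOn k (Icc a b)) (hkpos : ∀ x ∈ Icc a b, 0 < k x) :
    0 < ∫ x in Ioc a b, q x * k x := by
  rw [intervalIntegral.integral_of_le hab] at hqpos
  exact integral_mul_pos_of_integral_pos (hq.mono_set Ioc_subset_Icc_self)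
    (ae_restrict_of_ae_restrict_of_subset Ioc_subset_Icc_self hq0) hqpos
    (ae_restrict_of_forall_mem measurableSet_Ioc fun x hx => hkpos x (Ioc_subset_Icc_self hx))
    ((hq.mul_continuousOn hk isCompact_Icc).mono_set Ioc_subset_Icc_self)

end Interval

lemma xiR_eq_laplaceIntegral_sub_one {x₀ x₁ : ℝ} {g w : ℝ → ℝ} (q : ℝ → ℝ) (hx : x₀ ≤ x₁)
    (hginv : ContinuousOn (fun s => (g s)⁻¹) (Icc x₀ x₁))
    (hwg : ContinuousOn (fun s => w s / g s) (Icc x₀ x₁)) (l : ℝ) :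
    xiR x₀ x₁ g w q l = laplaceIntegral (volume.restrict (Ioc x₀ x₁))
      (fun x => q x * ((g x)⁻¹ * Real.exp (-∫ s in x₀..x, w s / g s)))
      (fun x => ∫ s in x₀..x, (g s)⁻¹) l - 1 := by
  unfold xiR laplaceIntegral
  rw [intervalIntegral.integral_of_le hx]
  congr 1
  refine setIntegral_congr_fun measurableSet_Ioc fun x hx' => ?_
  rw [integral_add_div_eq_mul_add (Ioc_subset_Icc_self hx') hginv hwg, neg_add, Real.exp_add]
  ring

theorem stmt_11_general (x₀ x₁ Mq : ℝ) (hx : x₀ < x₁)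
    (g w q : ℝ → ℝ)
    (hg : ContDiffOn ℝ 1 g (Icc x₀ x₁)) (hgpos : ∀ x ∈ Icc x₀ x₁, 0 < g x)
    (hw : ContinuousOn w (Icc x₀ x₁))
    (hqm : Measurable q) (hqb : ∀ x ∈ Icc x₀ x₁, |q x| ≤ Mq)
    (hq0 : ∀ᵐ x ∂(volume.restrict (Icc x₀ x₁)), 0 ≤ q x)
    (hqpos : 0 < ∫ x in x₀..x₁, q x) :
    ∃! l₀ : ℝ, xiR x₀ x₁ g w q l₀ = 0 := by
  have hg0 : ∀ x ∈ Icc x₀ x₁, g x ≠ 0 := fun x hx => (hgpos x hx).ne'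
  have hginv : ContinuousOn (fun x => (g x)⁻¹) (Icc x₀ x₁) := hg.continuousOn.inv₀ hg0
  have hwg : ContinuousOn (fun x => w x / g x) (Icc x₀ x₁) := hw.div hg.continuousOn hg0
  have hFc := continuousOn_primitive_Icc hx.le hginv
  obtain ⟨B, hFB⟩ := isCompact_Icc.exists_bound_of_continuousOn hFc
  set k := fun x => (g x)⁻¹ * Real.exp (-∫ s in x₀..x, w s / g s)
  have hkc : ContinuousOn k (Icc x₀ x₁) :=
    hginv.mul (Real.continuous_exp.comp_continuousOn (continuousOn_primitive_Icc hx.le hwg).neg)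
  have hkpos : ∀ x ∈ Icc x₀ x₁, 0 < k x := fun x hx' =>
    mul_pos (inv_pos.2 (hgpos x hx')) (Real.exp_pos _)
  have hq : IntegrableOn q (Icc x₀ x₁) := Measure.integrableOn_of_bounded
    measure_Icc_lt_top.ne hqm.aestronglyMeasurable (ae_restrict_of_forall_mem measurableSet_Icc hqb)
  simp only [xiR_eq_laplaceIntegral_sub_one q hx.le hginv hwg, sub_eq_zero]
  refine existsUnique_laplaceIntegral_eq
    ((hq.mul_continuousOn hkc isCompact_Icc).mono_set Ioc_subset_Icc_self) ?_
    (setIntegral_Ioc_mul_pos hx.le hq hq0 hqpos hkc hkpos)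
    ((hFc.mono Ioc_subset_Icc_self).aestronglyMeasurable measurableSet_Ioc)
    (ae_restrict_of_forall_mem measurableSet_Ioc fun x hx' => hFB x (Ioc_subset_Icc_self hx'))
    (ae_restrict_of_forall_mem measurableSet_Ioc fun x hx' =>
      integral_pos_of_continuousOn_of_pos hginv (fun s hs => inv_pos.2 (hgpos s hs)) hx') one_pos
  filter_upwards [ae_restrict_of_ae_restrict_of_subset Ioc_subset_Icc_self hq0,
    ae_restrict_mem measurableSet_Ioc] with x hqx hx'
  exact mul_nonneg hqx (hkpos x (Ioc_subset_Icc_self hx')).le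

/-- There is a unique real `λ₀` with `ξ(λ₀) = 0`. -/
theorem stmt_11 (x₀ x₁ Mq : ℝ) (hx₀ : 0 < x₀) (hx : x₀ < x₁)
    (g w q : ℝ → ℝ)
    (hg : ContDiffOn ℝ 1 g (Icc x₀ x₁)) (hgpos : ∀ x ∈ Icc x₀ x₁, 0 < g x)
    (hw : ContinuousOn w (Icc x₀ x₁)) (hw0 : ∀ x ∈ Icc x₀ x₁, 0 ≤ w x)
    (hqm : Measurable q) (hqb : ∀ x ∈ Icc x₀ x₁, |q x| ≤ Mq)
    (hq0 : ∀ᵐ x ∂(volume.restrict (Icc x₀ x₁)), 0 ≤ q x)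
    (hqpos : 0 < ∫ x in x₀..x₁, q x) :
    ∃! l₀ : ℝ, xiR x₀ x₁ g w q l₀ = 0 :=
  stmt_11_general x₀ x₁ Mq hx g w q hg hgpos hw hqm hqb hq0 hqpos
end

section
/- For real λ with λ₁ > λ₀ and with ∫_{x₀}^{x₁} q > 0, one has ξ(λ₁) < ξ(λ₀); equivalently, if Re(λ₁) > λ₀ for complex λ₁ then Re(ξ(λ₁)) < ξ(λ₀), so ξ(λ₁) ≠ 0 when ξ(λ₀) = 0. -/
open MeasureTheory Set

/-!
For real `λ` the weight `exp (-∫_{x₀}^x (λ + w) / g)` is strictly decreasing in `λ` at every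
`x > x₀`, and `q ≥ 0` is not a.e. zero, so `ξ` is strictly decreasing. For complex `λ` the
modulus of the weight is the real weight at `Re λ`, hence `Re ξ(λ) ≤ |ξ(λ) + 1| - 1 ≤ ξ(Re λ)`.
-/

theorem continuousOn_primitive_of_continuousOn {E : Type*} [NormedAddCommGroup E]
    [NormedSpace ℝ E] {f : ℝ → E} {a b : ℝ} (hf : ContinuousOn f (Icc a b)) :
    ContinuousOn (fun x => ∫ t in a..x, f t) (Icc a b) := by
  rcases le_or_gt a b with hab | hba
  · rw [← uIcc_of_le hab] at hf ⊢
    exact intervalIntegral.continuousOn_primitive_interval hf.integrableOn_Icc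
  · simp [Icc_eq_empty_of_lt hba]

theorem integral_mul_lt_integral_mul_of_ae_lt {α : Type*} [MeasurableSpace α] {μ : Measure α}
    {p f h : α → ℝ} (hp : 0 ≤ᵐ[μ] p) (hp' : ∫ x, p x ∂μ ≠ 0) (hfh : ∀ᵐ x ∂μ, f x < h x)
    (hf : Integrable (fun x => p x * f x) μ) (hh : Integrable (fun x => p x * h x) μ) :
    ∫ x, p x * f x ∂μ < ∫ x, p x * h x ∂μ := by
  rw [← sub_pos, ← integral_sub hh hf]
  have hnonneg : 0 ≤ᵐ[μ] fun x => p x * h x - p x * f x := by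
    filter_upwards [hp, hfh] with x hpx hx
    rw [← mul_sub]
    exact mul_nonneg hpx (sub_nonneg.2 hx.le)
  refine (integral_nonneg_of_ae hnonneg).lt_of_ne fun hzero => hp' ?_
  have hae := (integral_eq_zero_iff_of_nonneg_ae hnonneg (hh.sub hf)).1 hzero.symm
  refine integral_eq_zero_of_ae ?_
  filter_upwards [hae, hfh] with x hx hlt
  rw [Pi.zero_apply, ← mul_sub] at hx
  exact (mul_eq_zero.1 hx).resolve_right (sub_pos.2 hlt).ne'

section Primitive

variable {a b : ℝ} {g w : ℝ → ℝ}

theorem intervalIntegral_add_div_lt_of_lt (hg : ContinuousOn g (Icc a b))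
    (hgpos : ∀ x ∈ Icc a b, 0 < g x) (hw : ContinuousOn w (Icc a b))
    {r₀ r₁ : ℝ} (hr : r₀ < r₁) {x : ℝ} (hx : x ∈ Ioc a b) :
    ∫ s in a..x, (r₀ + w s) / g s < ∫ s in a..x, (r₁ + w s) / g s := by
  have hsub : uIcc a x ⊆ Icc a b := by
    rw [uIcc_of_le hx.1.le]; exact Icc_subset_Icc_right hx.2
  have hint : ∀ r : ℝ, IntervalIntegrable (fun s => (r + w s) / g s) volume a x := fun r =>
    ContinuousOn.intervalIntegrable <|
      ((continuousOn_const.add hw).div hg fun s hs => (hgpos s hs).ne').mono hsub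
  rw [← sub_pos, ← intervalIntegral.integral_sub (hint r₁) (hint r₀)]
  refine intervalIntegral.intervalIntegral_pos_of_pos_on ?_ (fun s hs => ?_) hx.1
  · exact (hint r₁).sub (hint r₀)
  · rw [div_sub_div_same, add_sub_add_right_eq_sub]
    exact div_pos (sub_pos.2 hr) (hgpos s ⟨hs.1.le, hs.2.le.trans hx.2⟩)

theorem re_intervalIntegral_add_div (hg : ContinuousOn g (Icc a b))
    (hgpos : ∀ x ∈ Icc a b, 0 < g x) (hw : ContinuousOn w (Icc a b)) (l : ℂ) {x : ℝ}
    (hx : x ∈ Icc a b) :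
    (∫ s in a..x, (l + (w s : ℂ)) / (g s : ℂ)).re = ∫ s in a..x, (l.re + w s) / g s := by
  have hsub : uIcc a x ⊆ Icc a b := by
    rw [uIcc_of_le hx.1]; exact Icc_subset_Icc_right hx.2
  have hcont : ContinuousOn (fun s => (l + (w s : ℂ)) / (g s : ℂ)) (Icc a b) :=
    (continuousOn_const.add (Complex.continuous_ofReal.comp_continuousOn hw)).div
      (Complex.continuous_ofReal.comp_continuousOn hg)
      fun s hs => Complex.ofReal_ne_zero.2 (hgpos s hs).ne'
  rw [← RCLike.re_to_complex,
    ← intervalIntegral.intervalIntegral_re (hcont.mono hsub).intervalIntegrable]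
  simp [Complex.div_ofReal_re]

end Primitive

section CharacteristicFunction

variable {x₀ x₁ : ℝ} {g w q : ℝ → ℝ}

theorem xiR_strictAnti (hx : x₀ ≤ x₁) (hg : ContinuousOn g (Icc x₀ x₁))
    (hgpos : ∀ x ∈ Icc x₀ x₁, 0 < g x) (hw : ContinuousOn w (Icc x₀ x₁))
    (hq0 : ∀ᵐ x ∂(volume.restrict (Icc x₀ x₁)), 0 ≤ q x)
    (hqpos : 0 < ∫ x in x₀..x₁, q x) :
    StrictAnti (xiR x₀ x₁ g w q) := by
  -- the integral of a non-integrable function is `0`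
  have hq : IntegrableOn q (Ioc x₀ x₁) :=
    (intervalIntegral.intervalIntegrable_of_integral_ne_zero hqpos.ne').1
  have hweight : ∀ r : ℝ,
      ContinuousOn (fun x => Real.exp (-∫ s in x₀..x, (r + w s) / g s) / g x) (Icc x₀ x₁) :=
    fun r => (Real.continuous_exp.comp_continuousOn
      (continuousOn_primitive_of_continuousOn
        ((continuousOn_const.add hw).div hg fun s hs => (hgpos s hs).ne')).neg).div
      hg fun x hx => (hgpos x hx).ne'
  intro r₀ r₁ hr
  simp only [xiR, sub_lt_sub_iff_right, mul_comm_div, intervalIntegral.integral_of_le hx]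
  refine integral_mul_lt_integral_mul_of_ae_lt
    (ae_restrict_of_ae_restrict_of_subset Ioc_subset_Icc_self hq0)
    (by rw [← intervalIntegral.integral_of_le hx]; exact hqpos.ne') ?_
    (hq.mul_continuousOn_of_subset (hweight r₁) measurableSet_Ioc isCompact_Icc
      Ioc_subset_Icc_self)
    (hq.mul_continuousOn_of_subset (hweight r₀) measurableSet_Ioc isCompact_Icc
      Ioc_subset_Icc_self)
  filter_upwards [ae_restrict_mem measurableSet_Ioc] with x hxI
  exact div_lt_div_of_pos_right
    (Real.exp_lt_exp.2 (neg_lt_neg (intervalIntegral_add_div_lt_of_lt hg hgpos hw hr hxI)))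
    (hgpos x (Ioc_subset_Icc_self hxI))

theorem re_xiC_le_xiR (hx : x₀ ≤ x₁) (hg : ContinuousOn g (Icc x₀ x₁))
    (hgpos : ∀ x ∈ Icc x₀ x₁, 0 < g x) (hw : ContinuousOn w (Icc x₀ x₁))
    (hq0 : ∀ᵐ x ∂(volume.restrict (Icc x₀ x₁)), 0 ≤ q x) (l : ℂ) :
    (xiC x₀ x₁ g w q l).re ≤ xiR x₀ x₁ g w q l.re := by
  simp only [xiC, xiR, Complex.sub_re, Complex.one_re, sub_le_sub_iff_right]
  refine (Complex.re_le_norm _).trans <|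
    (intervalIntegral.norm_integral_le_integral_norm hx).trans_eq <|
    intervalIntegral.integral_congr_ae ?_
  filter_upwards [(ae_restrict_iff' measurableSet_Icc).1 hq0] with x hqx hxI
  have hxI : x ∈ Icc x₀ x₁ := by
    rw [uIoc_of_le hx] at hxI; exact Ioc_subset_Icc_self hxI
  rw [norm_mul, Complex.norm_real, Real.norm_of_nonneg (div_nonneg (hqx hxI) (hgpos x hxI).le),
    Complex.norm_exp, Complex.neg_re, re_intervalIntegral_add_div hg hgpos hw l hxI]

end CharacteristicFunction

theorem stmt_14_general (x₀ x₁ : ℝ) (hx : x₀ < x₁)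
    (g w q : ℝ → ℝ)
    (hg : ContDiffOn ℝ 1 g (Icc x₀ x₁)) (hgpos : ∀ x ∈ Icc x₀ x₁, 0 < g x)
    (hw : ContinuousOn w (Icc x₀ x₁))
    (hq0 : ∀ᵐ x ∂(volume.restrict (Icc x₀ x₁)), 0 ≤ q x)
    (hqpos : 0 < ∫ x in x₀..x₁, q x) (l₀ : ℝ) :
    (∀ l₁ : ℝ, l₀ < l₁ → xiR x₀ x₁ g w q l₁ < xiR x₀ x₁ g w q l₀) ∧
    (∀ l₁ : ℂ, l₀ < l₁.re → (xiC x₀ x₁ g w q l₁).re < xiR x₀ x₁ g w q l₀) ∧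
    (∀ l₁ : ℂ, l₀ < l₁.re → xiR x₀ x₁ g w q l₀ = 0 → xiC x₀ x₁ g w q l₁ ≠ 0) := by
  have hanti := xiR_strictAnti hx.le hg.continuousOn hgpos hw hq0 hqpos
  have hre : ∀ l₁ : ℂ, l₀ < l₁.re → (xiC x₀ x₁ g w q l₁).re < xiR x₀ x₁ g w q l₀ :=
    fun l₁ h => (re_xiC_le_xiR hx.le hg.continuousOn hgpos hw hq0 l₁).trans_lt (hanti h)
  refine ⟨fun l₁ h => hanti h, hre, fun l₁ h h0 hzero => ?_⟩
  simpa [h0, hzero] using hre l₁ h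

/-- If `λ₀ < λ₁` (real) then `ξ(λ₁) < ξ(λ₀)`; if `λ₀ < Re λ₁` (complex) then
`Re ξ(λ₁) < ξ(λ₀)`, so `ξ(λ₁) ≠ 0` when `ξ(λ₀) = 0`. -/
theorem stmt_14 (x₀ x₁ Mq : ℝ) (hx₀ : 0 < x₀) (hx : x₀ < x₁)
    (g w q : ℝ → ℝ)
    (hg : ContDiffOn ℝ 1 g (Icc x₀ x₁)) (hgpos : ∀ x ∈ Icc x₀ x₁, 0 < g x)
    (hw : ContinuousOn w (Icc x₀ x₁)) (hw0 : ∀ x ∈ Icc x₀ x₁, 0 ≤ w x)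
    (hqm : Measurable q) (hqb : ∀ x ∈ Icc x₀ x₁, |q x| ≤ Mq)
    (hq0 : ∀ᵐ x ∂(volume.restrict (Icc x₀ x₁)), 0 ≤ q x)
    (hqpos : 0 < ∫ x in x₀..x₁, q x) (l₀ : ℝ) :
    (∀ l₁ : ℝ, l₀ < l₁ → xiR x₀ x₁ g w q l₁ < xiR x₀ x₁ g w q l₀) ∧
    (∀ l₁ : ℂ, l₀ < l₁.re → (xiC x₀ x₁ g w q l₁).re < xiR x₀ x₁ g w q l₀) ∧
    (∀ l₁ : ℂ, l₀ < l₁.re → xiR x₀ x₁ g w q l₀ = 0 → xiC x₀ x₁ g w q l₁ ≠ 0) :=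
  stmt_14_general x₀ x₁ hx g w q hg hgpos hw hq0 hqpos l₀
end
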